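/- arXiv:2512.04174 — 2 statements merged into one kernel-verified Lean document; each statement's English description precedes it below -/
import Mathlib

section
/- Let A and B be connected, induced, left-closed subgraphs of 𝒢 with card V_A > 2·D·D̂, card V_B > 2·D·D̂, V_A ∩ V_B ≠ ∅ and V̂_A ∩ V̂_B ≠ ∅. Then, with A ∪ B the (automatically induced and left-closed) subgraph on (V̂_A ∪ V̂_B, V_A ∪ V_B), the kernels of the restricted Hamiltonians satisfy ker H'_A ∩ ker H'_B = ker H'_{A∪B} as subspaces of ℋ. -/
open scoped Classical

section

variable {Vhat V : Type*}

/-- The bipartite (Tanner) graph on `Vhat ⊕ V` associated to the biadjacency matrix `𝔥`. -/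
def bipGraph (𝔥 : Matrix Vhat V (ZMod 2)) : SimpleGraph (Vhat ⊕ V) where
  Adj x y := match x, y with
    | Sum.inl a, Sum.inr b => 𝔥 a b = 1
    | Sum.inr b, Sum.inl a => 𝔥 a b = 1
    | _, _ => False
  symm := ⟨fun x y hxy => by cases x <;> cases y <;> simp_all⟩
  loopless := ⟨fun x hx => by cases x <;> simp_all⟩

/-- The vertex set (inside `Vhat ⊕ V`) of a subgraph datum `(Shat, S)`. -/
def pairSet' (Shat : Finset Vhat) (S : Finset V) : Set (Vhat ⊕ V) :=
  Sum.elim (fun a => a ∈ Shat) (fun v => v ∈ S)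

/-- `(Shat, S)` is left-closed: every `v̂ ∈ Shat` has all of its neighbours inside `S`. -/
def LeftClosed (𝔥 : Matrix Vhat V (ZMod 2)) (Shat : Finset Vhat) (S : Finset V) : Prop :=
  ∀ w ∈ Shat, ∀ v : V, 𝔥 w v = 1 → v ∈ S

/-- The (induced) subgraph of the Tanner graph on the vertices `(Shat, S)`, realised as a
graph on the ambient vertex type: it carries all edges of `𝒢` between member vertices. -/
def subGraph (𝔥 : Matrix Vhat V (ZMod 2)) (Shat : Finset Vhat) (S : Finset V) :
    SimpleGraph (Vhat ⊕ V) where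
  Adj x y := (bipGraph 𝔥).Adj x y ∧ x ∈ pairSet' Shat S ∧ y ∈ pairSet' Shat S
  symm := ⟨fun x y hxy => ⟨(bipGraph 𝔥).adj_symm hxy.1, hxy.2.2, hxy.2.1⟩⟩
  loopless := ⟨fun x hx => (bipGraph 𝔥).irrefl hx.1⟩

variable [Fintype Vhat] [Fintype V] [DecidableEq Vhat] [DecidableEq V]

/-- The restricted deformed Hamiltonian `H'_X` for the subgraph `X = (Shat, S)`:
`(H'_X ψ)(σ) = ∑_{(v,v̂) ∈ S × Shat, d_X(v,v̂) = 3} 𝟙[σ v = 1]·(ψ(σ) − ψ(σ + r_{v̂}))`,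
with `d_X` the graph distance inside `X`. -/
noncomputable def HdefOn (𝔥 : Matrix Vhat V (ZMod 2)) (Shat : Finset Vhat) (S : Finset V) :
    EuclideanSpace ℂ (V → ZMod 2) →ₗ[ℂ] EuclideanSpace ℂ (V → ZMod 2) where
  toFun ψ := WithLp.toLp 2 fun σ =>
    ∑ p : V × Vhat,
      if p.1 ∈ S ∧ p.2 ∈ Shat ∧
          (subGraph 𝔥 Shat S).dist (Sum.inr p.1) (Sum.inl p.2) = 3 ∧ σ p.1 = 1
      then ψ σ - ψ (σ + fun v => 𝔥 p.2 v) else 0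
  map_add' := by
    intro ψ φ
    ext σ
    show (∑ p : V × Vhat, (_ : ℂ)) = (∑ p : V × Vhat, (_ : ℂ)) + (∑ p : V × Vhat, (_ : ℂ))
    rw [← Finset.sum_add_distrib]
    refine Finset.sum_congr rfl fun p _ => ?_
    by_cases hp : p.1 ∈ S ∧ p.2 ∈ Shat ∧
        (subGraph 𝔥 Shat S).dist (Sum.inr p.1) (Sum.inl p.2) = 3 ∧ σ p.1 = 1
    · simp only [if_pos hp, PiLp.add_apply]
      ring
    · simp [if_neg hp]
  map_smul' := by
    intro c ψ
    ext σ
    show (∑ p : V × Vhat, (_ : ℂ)) = c * (∑ p : V × Vhat, (_ : ℂ))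
    rw [Finset.mul_sum]
    refine Finset.sum_congr rfl fun p _ => ?_
    by_cases hp : p.1 ∈ S ∧ p.2 ∈ Shat ∧
        (subGraph 𝔥 Shat S).dist (Sum.inr p.1) (Sum.inl p.2) = 3 ∧ σ p.1 = 1
    · simp only [if_pos hp, PiLp.smul_apply, smul_eq_mul]
      ring
    · simp [if_neg hp]

/-! ### Auxiliary development for Statement 7 -/

section S7Aux
open SimpleGraph
set_option linter.unusedSectionVars false

variable {𝔥 : Matrix Vhat V (ZMod 2)} {Shat : Finset Vhat} {S : Finset V}

lemma S7.zmod2_cases (x : ZMod 2) : x = 0 ∨ x = 1 := by revert x; decide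

lemma S7.add_add_cancel (σ r : V → ZMod 2) : σ + r + r = σ := by
  funext x
  simp [add_assoc, CharTwo.add_self_eq_zero]

/-- The parity function on `Vhat ⊕ V`. -/
def S7.sideFun : Vhat ⊕ V → ZMod 2 := Sum.elim (fun _ => 0) (fun _ => 1)

lemma S7.side_adj {x y : Vhat ⊕ V} (h : (subGraph 𝔥 Shat S).Adj x y) :
    S7.sideFun x + S7.sideFun y = 1 := by
  rcases x with a | a <;> rcases y with b | b
  · exact h.1.elim
  · simp [S7.sideFun]
  · simp [S7.sideFun]
  · exact h.1.elim

lemma S7.walk_parity {x y : Vhat ⊕ V} (p : (subGraph 𝔥 Shat S).Walk x y) :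
    (p.length : ZMod 2) = S7.sideFun x + S7.sideFun y := by
  induction p with
  | nil => simp [CharTwo.add_self_eq_zero]
  | @cons a b c h q ih =>
    rw [SimpleGraph.Walk.length_cons]
    push_cast
    rw [ih]
    have hs := S7.side_adj (𝔥 := 𝔥) (Shat := Shat) (S := S) h
    revert hs
    generalize S7.sideFun (Vhat := Vhat) (V := V) a = sa
    generalize S7.sideFun (Vhat := Vhat) (V := V) b = sb
    generalize S7.sideFun (Vhat := Vhat) (V := V) c = sc
    generalize (q.length : ZMod 2) = ql
    revert sa sb sc ql
    decide

lemma S7.dist_odd {v : V} {w : Vhat}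
    (h : (subGraph 𝔥 Shat S).Reachable (Sum.inr v) (Sum.inl w)) :
    Odd ((subGraph 𝔥 Shat S).dist (Sum.inr v) (Sum.inl w)) := by
  obtain ⟨p, hp⟩ := h.exists_walk_length_eq_dist
  have hpar := S7.walk_parity p
  rw [hp] at hpar
  rcases Nat.even_or_odd ((subGraph 𝔥 Shat S).dist (Sum.inr v) (Sum.inl w)) with he | ho
  · exfalso
    obtain ⟨k, hk⟩ := he
    rw [hk] at hpar
    push_cast at hpar
    rw [CharTwo.add_self_eq_zero] at hpar
    simp [S7.sideFun] at hpar
  · exact ho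

lemma S7.subGraph_adj_mk {v : V} {w : Vhat} (h1 : 𝔥 w v = 1) (hv : v ∈ S) (hw : w ∈ Shat) :
    (subGraph 𝔥 Shat S).Adj (Sum.inr v) (Sum.inl w) := by
  exact ⟨h1, hv, hw⟩

lemma S7.row_eq_zero_of_dist_ne_one {v : V} {w : Vhat} (hv : v ∈ S) (hw : w ∈ Shat)
    (hd : (subGraph 𝔥 Shat S).dist (Sum.inr v) (Sum.inl w) ≠ 1) : 𝔥 w v = 0 := by
  rcases S7.zmod2_cases (𝔥 w v) with h0 | h1
  · exact h0
  · exact absurd (SimpleGraph.dist_eq_one_iff_adj.mpr (S7.subGraph_adj_mk h1 hv hw)) hd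

lemma S7.walk_prefix_bound {X : Type*} {G : SimpleGraph X} :
    ∀ {x y : X} (p : G.Walk x y) (i : ℕ),
    ∃ q : G.Walk x (p.getVert i), q.length ≤ i := by
  intro x y p
  induction p with
  | nil => intro i; exact ⟨Walk.nil.copy rfl (by simp [Walk.getVert]), by simp⟩
  | @cons a b c h q ih =>
    intro i
    cases i with
    | zero => exact ⟨Walk.nil.copy rfl (by simp [Walk.getVert_zero]), by simp⟩
    | succ i =>
      obtain ⟨r, hr⟩ := ih i
      exact ⟨(r.cons h).copy rfl (by rw [Walk.getVert_cons_succ]),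
        by simpa using Nat.succ_le_succ hr⟩

lemma S7.walk_suffix_bound {X : Type*} {G : SimpleGraph X} :
    ∀ {x y : X} (p : G.Walk x y) (i : ℕ),
    ∃ q : G.Walk (p.getVert i) y, q.length ≤ p.length - i := by
  intro x y p
  induction p with
  | nil => intro i; exact ⟨Walk.nil.copy (by simp [Walk.getVert]) rfl, by simp⟩
  | @cons a b c h q ih =>
    intro i
    cases i with
    | zero => exact ⟨(q.cons h).copy (by simp [Walk.getVert_zero]) rfl, by simp⟩
    | succ i =>
      obtain ⟨r, hr⟩ := ih i
      exact ⟨r.copy (by rw [Walk.getVert_cons_succ]) rfl, by simpa using hr.trans (by omega)⟩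

lemma S7.reachable_sub (hconn : ((bipGraph 𝔥).induce (pairSet' Shat S)).Connected)
    {x y : Vhat ⊕ V} (hx : x ∈ pairSet' Shat S) (hy : y ∈ pairSet' Shat S) :
    (subGraph 𝔥 Shat S).Reachable x y := by
  obtain ⟨p⟩ := hconn ⟨x, hx⟩ ⟨y, hy⟩
  let f : ((bipGraph 𝔥).induce (pairSet' Shat S)) →g (subGraph 𝔥 Shat S) :=
    { toFun := Subtype.val,
      map_rel' := fun {a b} hab => by exact ⟨hab, a.2, b.2⟩ }
  exact ⟨p.map f⟩

/-- The constraint associated to a pair `(v, w)`. -/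
def S7.Con (𝔥 : Matrix Vhat V (ZMod 2)) (ψ : EuclideanSpace ℂ (V → ZMod 2))
    (v : V) (w : Vhat) : Prop :=
  ∀ σ : V → ZMod 2, σ v = 1 → ψ (σ + fun x => 𝔥 w x) = ψ σ

/-- Characterization of the kernel of `HdefOn` via the distance-3 constraints. -/
lemma S7.ker_iff (ψ : EuclideanSpace ℂ (V → ZMod 2)) :
    HdefOn 𝔥 Shat S ψ = 0 ↔ ∀ v w, v ∈ S → w ∈ Shat →
      (subGraph 𝔥 Shat S).dist (Sum.inr v) (Sum.inl w) = 3 → S7.Con 𝔥 ψ v w := by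
  have happ : ∀ (σ : V → ZMod 2), (HdefOn 𝔥 Shat S) ψ σ =
      ∑ p : V × Vhat,
        (if p.1 ∈ S ∧ p.2 ∈ Shat ∧
            (subGraph 𝔥 Shat S).dist (Sum.inr p.1) (Sum.inl p.2) = 3 ∧ σ p.1 = 1
          then ψ σ - ψ (σ + fun x => 𝔥 p.2 x) else 0) := fun σ => rfl
  constructor
  · -- hard direction
    intro h0 v w hv hw hd σ0 hσ0
    have hH : ∀ (σ : V → ZMod 2),
        (∑ p : V × Vhat,
          (if p.1 ∈ S ∧ p.2 ∈ Shat ∧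
              (subGraph 𝔥 Shat S).dist (Sum.inr p.1) (Sum.inl p.2) = 3 ∧ σ p.1 = 1
            then ψ σ - ψ (σ + fun x => 𝔥 p.2 x) else 0)) = 0 := by
      intro σ
      rw [← happ σ, h0]
      rfl
    classical
    set static : V × Vhat → Prop := fun p => p.1 ∈ S ∧ p.2 ∈ Shat ∧
      (subGraph 𝔥 Shat S).dist (Sum.inr p.1) (Sum.inl p.2) = 3 with hstatic
    have hrow : ∀ p : V × Vhat, static p → 𝔥 p.2 p.1 = 0 := by
      intro p hp
      exact S7.row_eq_zero_of_dist_ne_one hp.1 hp.2.1 (by rw [hp.2.2]; omega)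
    -- the slice sum for each pair
    set E : V × Vhat → ℂ := fun p =>
      ∑ σ ∈ Finset.univ.filter (fun σ : V → ZMod 2 => σ p.1 = 1),
        (starRingEnd ℂ) (ψ σ) * (ψ σ - ψ (σ + fun x => 𝔥 p.2 x)) with hE
    set F : V × Vhat → ℝ := fun p =>
      ∑ σ ∈ Finset.univ.filter (fun σ : V → ZMod 2 => σ p.1 = 1),
        Complex.normSq (ψ σ - ψ (σ + fun x => 𝔥 p.2 x)) with hF
    have H1 : (∑ p : V × Vhat, (if static p then E p else 0)) = 0 := by
      have h' : (∑ σ : V → ZMod 2, (starRingEnd ℂ) (ψ σ) *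
          (∑ p : V × Vhat,
            (if p.1 ∈ S ∧ p.2 ∈ Shat ∧
                (subGraph 𝔥 Shat S).dist (Sum.inr p.1) (Sum.inl p.2) = 3 ∧ σ p.1 = 1
              then ψ σ - ψ (σ + fun x => 𝔥 p.2 x) else 0))) = 0 := by
        apply Finset.sum_eq_zero
        intro σ _
        rw [hH σ, mul_zero]
      simp only [Finset.mul_sum] at h'
      rw [Finset.sum_comm] at h'
      refine Eq.trans (Finset.sum_congr rfl ?_) h'
      intro p _
      by_cases hs : static p
      · rw [if_pos hs]
        rw [hE]
        simp only
        rw [Finset.sum_filter]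
        apply Finset.sum_congr rfl
        intro σ _
        by_cases hσ : σ p.1 = 1
        · rw [if_pos hσ, if_pos ⟨hs.1, hs.2.1, hs.2.2, hσ⟩]
        · rw [if_neg hσ, if_neg (by tauto), mul_zero]
      · rw [if_neg hs]
        apply (Finset.sum_eq_zero _).symm
        intro σ _
        rw [if_neg (by tauto), mul_zero]
    -- double-sum identity: for static p, E p + E p = F p
    have Hdouble : ∀ p : V × Vhat, static p → E p + E p = ((F p : ℝ) : ℂ) := by
      intro p hp
      have hrv : 𝔥 p.2 p.1 = 0 := hrow p hp
      set r : V → ZMod 2 := fun x => 𝔥 p.2 x with hr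
      have hmem : ∀ σ : V → ZMod 2,
          σ ∈ Finset.univ.filter (fun σ : V → ZMod 2 => σ p.1 = 1) →
          (σ + r) ∈ Finset.univ.filter (fun σ : V → ZMod 2 => σ p.1 = 1) := by
        intro σ hσ
        simp only [Finset.mem_filter, Finset.mem_univ, true_and] at hσ ⊢
        simp [Pi.add_apply, hσ, hr, hrv]
      have hrecover : ∀ σ : V → ZMod 2, σ + r + r = σ := fun σ => S7.add_add_cancel σ r
      have hre : (∑ σ ∈ Finset.univ.filter (fun σ : V → ZMod 2 => σ p.1 = 1),
          (starRingEnd ℂ) (ψ (σ + r)) * (ψ σ - ψ (σ + r)))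
          = ∑ σ ∈ Finset.univ.filter (fun σ : V → ZMod 2 => σ p.1 = 1),
          (starRingEnd ℂ) (ψ σ) * (ψ (σ + r) - ψ σ) := by
        apply Finset.sum_nbij' (fun σ => σ + r) (fun σ => σ + r)
        · exact hmem
        · exact hmem
        · intro σ _; exact hrecover σ
        · intro σ _; exact hrecover σ
        · intro σ _
          rw [hrecover σ]
      have hsplit : E p + E p =
          ∑ σ ∈ Finset.univ.filter (fun σ : V → ZMod 2 => σ p.1 = 1),
            ((starRingEnd ℂ) (ψ σ - ψ (σ + r)) * (ψ σ - ψ (σ + r))) := by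
        have e1 : E p = ∑ σ ∈ Finset.univ.filter (fun σ : V → ZMod 2 => σ p.1 = 1),
            (starRingEnd ℂ) (ψ σ) * (ψ σ - ψ (σ + r)) := by
          simp only [hE, hr]
        rw [e1]
        rw [← Finset.sum_add_distrib]
        have e2 : ∀ σ : V → ZMod 2,
            (starRingEnd ℂ) (ψ σ) * (ψ σ - ψ (σ + r)) + (starRingEnd ℂ) (ψ σ) * (ψ σ - ψ (σ + r))
            = (starRingEnd ℂ) (ψ σ) * (ψ σ - ψ (σ + r))
              - ((starRingEnd ℂ) (ψ σ) * (ψ (σ + r) - ψ σ)) := by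
          intro σ; ring
        rw [Finset.sum_congr rfl (fun σ _ => e2 σ)]
        rw [Finset.sum_sub_distrib, ← hre, ← Finset.sum_sub_distrib]
        apply Finset.sum_congr rfl
        intro σ _
        rw [map_sub]
        ring
      rw [hsplit]
      have e3 : ∀ σ : V → ZMod 2,
          (starRingEnd ℂ) (ψ σ - ψ (σ + r)) * (ψ σ - ψ (σ + r))
          = ((Complex.normSq (ψ σ - ψ (σ + r)) : ℝ) : ℂ) := by
        intro σ
        rw [Complex.normSq_eq_conj_mul_self]
      rw [Finset.sum_congr rfl (fun σ _ => e3 σ)]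
      rw [← Complex.ofReal_sum]
    -- conclude
    have H2 : (∑ p : V × Vhat, (if static p then ((F p : ℝ) : ℂ) else 0)) = 0 := by
      have e4 : ∀ p : V × Vhat, (if static p then ((F p : ℝ) : ℂ) else 0)
          = (if static p then E p else 0) + (if static p then E p else 0) := by
        intro p
        by_cases hs : static p
        · simp only [if_pos hs]
          exact (Hdouble p hs).symm
        · simp only [if_neg hs]
          rw [add_zero]
      rw [Finset.sum_congr rfl (fun p _ => e4 p), Finset.sum_add_distrib, H1, add_zero]
    have H3 : (∑ p : V × Vhat, (if static p then F p else 0)) = 0 := by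
      apply Complex.ofReal_eq_zero.mp
      rw [Complex.ofReal_sum]
      rw [← H2]
      apply Finset.sum_congr rfl
      intro p _
      exact apply_ite (fun x : ℝ => (x : ℂ)) (static p) (F p) 0
    have Hnn : ∀ p ∈ (Finset.univ : Finset (V × Vhat)), (0:ℝ) ≤ (if static p then F p else 0) := by
      intro p _
      by_cases hs : static p
      · rw [if_pos hs]
        simp only [hF]
        exact Finset.sum_nonneg (fun σ _ => Complex.normSq_nonneg _)
      · rw [if_neg hs]
    have H4 := (Finset.sum_eq_zero_iff_of_nonneg Hnn).mp H3 (v, w) (Finset.mem_univ _)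
    have hstat : static (v, w) := ⟨hv, hw, hd⟩
    rw [if_pos hstat] at H4
    have H5 := (Finset.sum_eq_zero_iff_of_nonneg
        (fun σ _ => Complex.normSq_nonneg (ψ σ - ψ (σ + fun x => 𝔥 (v, w).2 x)))).mp H4 σ0
        (Finset.mem_filter.mpr ⟨Finset.mem_univ _, hσ0⟩)
    have H6 : ψ σ0 - ψ (σ0 + fun x => 𝔥 w x) = 0 := Complex.normSq_eq_zero.mp H5
    exact (sub_eq_zero.mp H6).symm
  · intro hcon
    ext σ
    rw [happ σ]
    show _ = (0 : ℂ)
    apply Finset.sum_eq_zero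
    intro p _
    by_cases hp : p.1 ∈ S ∧ p.2 ∈ Shat ∧
        (subGraph 𝔥 Shat S).dist (Sum.inr p.1) (Sum.inl p.2) = 3 ∧ σ p.1 = 1
    · rw [if_pos hp, hcon p.1 p.2 hp.1 hp.2.1 hp.2.2.1 σ hp.2.2.2, sub_self]
    · rw [if_neg hp]

lemma S7.adj_inr {v : V} {y : Vhat ⊕ V} (h : (subGraph 𝔥 Shat S).Adj (Sum.inr v) y) :
    ∃ w, y = Sum.inl w ∧ 𝔥 w v = 1 ∧ w ∈ Shat := by
  rcases y with w | u
  · exact ⟨w, rfl, h.1, h.2.2⟩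
  · exact h.1.elim

lemma S7.adj_inl {w : Vhat} {y : Vhat ⊕ V} (h : (subGraph 𝔥 Shat S).Adj (Sum.inl w) y) :
    ∃ u, y = Sum.inr u ∧ 𝔥 w u = 1 ∧ u ∈ S := by
  rcases y with w' | u
  · exact h.1.elim
  · exact ⟨u, rfl, h.1, h.2.2⟩

/-- All constraints for non-adjacent pairs inside a connected subgraph follow from the
distance-3 constraints. -/
lemma S7.con_all (hconn : ((bipGraph 𝔥).induce (pairSet' Shat S)).Connected)
    {ψ : EuclideanSpace ℂ (V → ZMod 2)}
    (h3 : ∀ v w, v ∈ S → w ∈ Shat →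
      (subGraph 𝔥 Shat S).dist (Sum.inr v) (Sum.inl w) = 3 → S7.Con 𝔥 ψ v w) :
    ∀ v w, v ∈ S → w ∈ Shat → 𝔥 w v = 0 → S7.Con 𝔥 ψ v w := by
  have aux : ∀ n : ℕ, 3 ≤ n → Odd n → ∀ v w, v ∈ S → w ∈ Shat →
      (subGraph 𝔥 Shat S).dist (Sum.inr v) (Sum.inl w) = n → S7.Con 𝔥 ψ v w := by
    intro n
    induction n using Nat.strong_induction_on with
    | _ n IH =>
      intro h3n hodd v w hv hw hd
      by_cases hn3 : n = 3
      · exact h3 v w hv hw (by rw [hd, hn3])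
      · have h5 : 5 ≤ n := by obtain ⟨k, hk⟩ := hodd; omega
        have hne0 : (subGraph 𝔥 Shat S).dist (Sum.inr v) (Sum.inl w) ≠ 0 := by rw [hd]; omega
        obtain ⟨p, hp⟩ := SimpleGraph.exists_walk_of_dist_ne_zero hne0
        rw [hd] at hp
        have hadj01 := p.adj_getVert_succ (i := 0) (by omega)
        have hadj12 := p.adj_getVert_succ (i := 1) (by omega)
        have hadj23 := p.adj_getVert_succ (i := 2) (by omega)
        rw [Walk.getVert_zero] at hadj01
        obtain ⟨w1, h1eq, hw1v, hw1mem⟩ := S7.adj_inr hadj01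
        rw [h1eq] at hadj12
        obtain ⟨u2, h2eq, hw1u2, hu2mem⟩ := S7.adj_inl hadj12
        rw [h2eq] at hadj23
        obtain ⟨w3, h3eq, hw3u2, hw3mem⟩ := S7.adj_inr hadj23
        -- the prefix/suffix walks
        obtain ⟨q3, hq3⟩ := S7.walk_prefix_bound p 3
        obtain ⟨q3', hq3'⟩ := S7.walk_suffix_bound p 3
        obtain ⟨q2, hq2⟩ := S7.walk_prefix_bound p 2
        obtain ⟨q2', hq2'⟩ := S7.walk_suffix_bound p 2
        rw [hp] at hq3' hq2'
        -- dist (inr v) (inl w3) = 3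
        have hd3 : (subGraph 𝔥 Shat S).dist (Sum.inr v) (Sum.inl w3) = 3 := by
          have hle : (subGraph 𝔥 Shat S).dist (Sum.inr v) (Sum.inl w3) ≤ 3 := by
            refine le_trans (SimpleGraph.dist_le (q3.copy rfl h3eq)) ?_
            rwa [Walk.length_copy]
          have hreach3 : (subGraph 𝔥 Shat S).Reachable (Sum.inr v) (Sum.inl w3) :=
            ⟨q3.copy rfl h3eq⟩
          obtain ⟨qd, hqd⟩ := hreach3.exists_walk_length_eq_dist
          have hbig := SimpleGraph.dist_le (qd.append (q3'.copy h3eq rfl))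
          rw [hd, Walk.length_append, Walk.length_copy, hqd] at hbig
          omega
        -- dist (inr u2) (inl w) = n - 2
        have hdu : (subGraph 𝔥 Shat S).dist (Sum.inr u2) (Sum.inl w) = n - 2 := by
          have hle : (subGraph 𝔥 Shat S).dist (Sum.inr u2) (Sum.inl w) ≤ n - 2 := by
            refine le_trans (SimpleGraph.dist_le (q2'.copy h2eq rfl)) ?_
            rwa [Walk.length_copy]
          have hreach2 : (subGraph 𝔥 Shat S).Reachable (Sum.inr u2) (Sum.inl w) :=
            ⟨q2'.copy h2eq rfl⟩
          obtain ⟨qd, hqd⟩ := hreach2.exists_walk_length_eq_dist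
          have hbig := SimpleGraph.dist_le ((q2.copy rfl h2eq).append qd)
          rw [hd, Walk.length_append, Walk.length_copy, hqd] at hbig
          omega
        have hcon3 : S7.Con 𝔥 ψ v w3 := h3 v w3 hv hw3mem hd3
        have hconIH : S7.Con 𝔥 ψ u2 w := by
          refine IH (n - 2) (by omega) (by omega) (by obtain ⟨k, hk⟩ := hodd; exact ⟨k - 1, by omega⟩)
            u2 w hu2mem hw hdu
        have hwv0 : 𝔥 w v = 0 :=
          S7.row_eq_zero_of_dist_ne_one hv hw (by rw [hd]; omega)
        intro σ hσ
        by_cases hx : σ u2 = 1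
        · exact hconIH σ hx
        · have hx0 : σ u2 = 0 := (S7.zmod2_cases _).resolve_right hx
          have e1 : ψ (σ + fun x => 𝔥 w3 x) = ψ σ := hcon3 σ hσ
          have hs2 : (σ + fun x => 𝔥 w3 x) u2 = 1 := by
            simp only [Pi.add_apply, hx0, hw3u2]; decide
          have e2 := hconIH (σ + fun x => 𝔥 w3 x) hs2
          have hs3 : (σ + fun x => 𝔥 w x) v = 1 := by
            simp only [Pi.add_apply, hσ, hwv0]; decide
          have e3 := hcon3 (σ + fun x => 𝔥 w x) hs3
          calc ψ (σ + fun x => 𝔥 w x)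
              = ψ ((σ + fun x => 𝔥 w x) + fun x => 𝔥 w3 x) := e3.symm
            _ = ψ ((σ + fun x => 𝔥 w3 x) + fun x => 𝔥 w x) := by rw [add_right_comm]
            _ = ψ (σ + fun x => 𝔥 w3 x) := e2
            _ = ψ σ := e1
  intro v w hv hw h0
  have hreach : (subGraph 𝔥 Shat S).Reachable (Sum.inr v) (Sum.inl w) :=
    S7.reachable_sub hconn (by exact hv) (by exact hw)
  have hpos := hreach.pos_dist_of_ne (by simp)
  have hodd := S7.dist_odd hreach
  have hne1 : (subGraph 𝔥 Shat S).dist (Sum.inr v) (Sum.inl w) ≠ 1 := by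
    intro h1
    have hadj := SimpleGraph.dist_eq_one_iff_adj.mp h1
    have : 𝔥 w v = 1 := hadj.1
    rw [h0] at this
    exact absurd this (by decide)
  refine aux _ ?_ hodd v w hv hw rfl
  obtain ⟨k, hk⟩ := hodd
  omega

/-- Distance-2 ball in `V` (common hat-neighbour relation). -/
def S7.ball2 (𝔥 : Matrix Vhat V (ZMod 2)) (u : V) : Finset V :=
  Finset.univ.filter (fun x => x = u ∨ ∃ w, 𝔥 w u = 1 ∧ 𝔥 w x = 1)

lemma S7.not_ball2 {u z : V} (h : z ∉ S7.ball2 𝔥 u) {w : Vhat} (hw : 𝔥 w u = 1) :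
    𝔥 w z = 0 := by
  rcases S7.zmod2_cases (𝔥 w z) with h0 | h1
  · exact h0
  · refine absurd ?_ h
    rw [S7.ball2, Finset.mem_filter]
    exact ⟨Finset.mem_univ _, Or.inr ⟨w, hw, h1⟩⟩

lemma S7.not_ball2' {u z : V} (h : z ∉ S7.ball2 𝔥 u) {w : Vhat} (hw : 𝔥 w z = 1) :
    𝔥 w u = 0 := by
  rcases S7.zmod2_cases (𝔥 w u) with h0 | h1
  · exact h0
  · have := S7.not_ball2 h h1
    rw [hw] at this
    exact absurd this (by decide)

lemma S7.ball2_card {D Dhat : ℕ} (hD : 1 ≤ D) (hDhat : 1 ≤ Dhat)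
    (hdegV : ∀ v : V, (Finset.univ.filter fun w : Vhat => 𝔥 w v = 1).card ≤ D)
    (hdegVhat : ∀ w : Vhat, (Finset.univ.filter fun v : V => 𝔥 w v = 1).card ≤ Dhat)
    (u : V) : (S7.ball2 𝔥 u).card ≤ D * Dhat := by
  by_cases hne : ∃ w : Vhat, 𝔥 w u = 1
  · obtain ⟨w0, hw0⟩ := hne
    have hsub : S7.ball2 𝔥 u ⊆ (Finset.univ.filter (fun w : Vhat => 𝔥 w u = 1)).biUnion
        (fun w => Finset.univ.filter (fun x : V => 𝔥 w x = 1)) := by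
      intro x hx
      rw [S7.ball2, Finset.mem_filter] at hx
      rcases hx.2 with rfl | ⟨w, hw1, hw2⟩
      · exact Finset.mem_biUnion.mpr ⟨w0, by simp [hw0], by simp [hw0]⟩
      · exact Finset.mem_biUnion.mpr ⟨w, by simp [hw1], by simp [hw2]⟩
    calc (S7.ball2 𝔥 u).card ≤ _ := Finset.card_le_card hsub
      _ ≤ ∑ w ∈ Finset.univ.filter (fun w : Vhat => 𝔥 w u = 1),
            (Finset.univ.filter (fun x : V => 𝔥 w x = 1)).card := Finset.card_biUnion_le
      _ ≤ ∑ _w ∈ Finset.univ.filter (fun w : Vhat => 𝔥 w u = 1), Dhat :=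
            Finset.sum_le_sum (fun w _ => hdegVhat w)
      _ = (Finset.univ.filter (fun w : Vhat => 𝔥 w u = 1)).card * Dhat := by
            rw [Finset.sum_const, smul_eq_mul]
      _ ≤ D * Dhat := Nat.mul_le_mul_right _ (hdegV u)
  · push_neg at hne
    have hsub : S7.ball2 𝔥 u ⊆ {u} := by
      intro x hx
      rw [S7.ball2, Finset.mem_filter] at hx
      rcases hx.2 with rfl | ⟨w, hw1, _⟩
      · exact Finset.mem_singleton_self _
      · exact absurd hw1 (hne w)
    calc (S7.ball2 𝔥 u).card ≤ ({u} : Finset V).card := Finset.card_le_card hsub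
      _ = 1 := Finset.card_singleton _
      _ ≤ D * Dhat := by
          have := Nat.mul_le_mul hD hDhat
          omega

lemma S7.exists_far {D Dhat : ℕ} (hD : 1 ≤ D) (hDhat : 1 ≤ Dhat)
    (hdegV : ∀ v : V, (Finset.univ.filter fun w : Vhat => 𝔥 w v = 1).card ≤ D)
    (hdegVhat : ∀ w : Vhat, (Finset.univ.filter fun v : V => 𝔥 w v = 1).card ≤ Dhat)
    {S : Finset V} (hcard : 2 * D * Dhat < S.card) (u v : V) :
    ∃ z ∈ S, z ∉ S7.ball2 𝔥 u ∧ z ∉ S7.ball2 𝔥 v := by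
  by_contra hcon
  push_neg at hcon
  have hsub : S ⊆ S7.ball2 𝔥 u ∪ S7.ball2 𝔥 v := by
    intro z hz
    by_cases hzu : z ∈ S7.ball2 𝔥 u
    · exact Finset.mem_union_left _ hzu
    · exact Finset.mem_union_right _ (hcon z hz hzu)
  have h1 := Finset.card_le_card hsub
  have h2 := Finset.card_union_le (S7.ball2 𝔥 u) (S7.ball2 𝔥 v)
  have b1 := S7.ball2_card hD hDhat hdegV hdegVhat u
  have b2 := S7.ball2_card hD hDhat hdegV hdegVhat v
  have : S.card ≤ D * Dhat + D * Dhat := le_trans h1 (le_trans h2 (Nat.add_le_add b1 b2))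
  rw [show D * Dhat + D * Dhat = 2 * D * Dhat by ring] at this
  exact absurd hcard (not_lt.mpr this)

lemma S7.exists_hat_neighbor (hconn : ((bipGraph 𝔥).induce (pairSet' Shat S)).Connected)
    (hcard : 1 < S.card) {z : V} (hz : z ∈ S) :
    ∃ w ∈ Shat, 𝔥 w z = 1 := by
  obtain ⟨z', hz', hne⟩ := Finset.exists_mem_ne hcard z
  have hreach : (subGraph 𝔥 Shat S).Reachable (Sum.inr z) (Sum.inr z') :=
    S7.reachable_sub hconn (by exact hz) (by exact hz')
  have hnezz : (Sum.inr z : Vhat ⊕ V) ≠ Sum.inr z' := by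
    intro h
    exact hne (Sum.inr.inj h).symm
  have hpos := hreach.pos_dist_of_ne hnezz
  obtain ⟨p, hp⟩ := hreach.exists_walk_length_eq_dist
  have hnn : ¬ p.Nil := by rw [SimpleGraph.Walk.not_nil_iff_lt_length]; omega
  have hadj := p.adj_snd hnn
  obtain ⟨w, _, hw1, hwmem⟩ := S7.adj_inr hadj
  exact ⟨w, hwmem, hw1⟩

/-- Core algebraic lemma: transporting an invariance across four commuting flips. -/
lemma S7.core (ψ : EuclideanSpace ℂ (V → ZMod 2)) (a b c h : V → ZMod 2) (v u z y : V)
    (Pa : ∀ σ : V → ZMod 2, σ v = 1 → ψ (σ + a) = ψ σ)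
    (Pb : ∀ σ : V → ZMod 2, σ z = 1 → ψ (σ + b) = ψ σ)
    (Pc : ∀ σ : V → ZMod 2, σ u = 1 → ψ (σ + c) = ψ σ)
    (Ph : ∀ σ : V → ZMod 2, σ y = 1 → ψ (σ + h) = ψ σ)
    (haz : a z = 1) (hbu : b u = 1) (hbz : b z = 0) (hcy : c y = 1) (hcz : c z = 0)
    (hcu : c u = 0) (hhv : h v = 0) (hhz : h z = 0) (hhu : h u = 1) :
    ∀ σ : V → ZMod 2, σ v = 1 → ψ (σ + h) = ψ σ := by
  have mini1 : ∀ σ : V → ZMod 2, σ z = 1 → σ u = 1 → ψ (σ + h) = ψ σ := by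
    intro σ hz hu
    by_cases hy : σ y = 1
    · exact Ph σ hy
    · have hy0 : σ y = 0 := (S7.zmod2_cases _).resolve_right hy
      have e5 : ψ (σ + c) = ψ σ := Pc σ hu
      have e4 : ψ (σ + c + h) = ψ (σ + c) :=
        Ph _ (by simp only [Pi.add_apply, hy0, hcy]; decide)
      have e1 : ψ (σ + h + b) = ψ (σ + h) :=
        Pb _ (by simp only [Pi.add_apply, hz, hhz]; decide)
      have e2 : ψ (σ + h + b + c) = ψ (σ + h + b) :=
        Pc _ (by simp only [Pi.add_apply, hu, hhu, hbu]; decide)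
      have e3 : ψ (σ + c + h + b) = ψ (σ + c + h) :=
        Pb _ (by simp only [Pi.add_apply, hz, hcz, hhz]; decide)
      calc ψ (σ + h) = ψ (σ + h + b) := e1.symm
        _ = ψ (σ + h + b + c) := e2.symm
        _ = ψ (σ + c + h + b) := by rw [show σ + h + b + c = σ + c + h + b by abel]
        _ = ψ (σ + c + h) := e3
        _ = ψ (σ + c) := e4
        _ = ψ σ := e5
  have mini2 : ∀ σ : V → ZMod 2, σ z = 1 → ψ (σ + h) = ψ σ := by
    intro σ hz
    by_cases hu : σ u = 1
    · exact mini1 σ hz hu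
    · have hu0 : σ u = 0 := (S7.zmod2_cases _).resolve_right hu
      have e1 : ψ (σ + b) = ψ σ := Pb σ hz
      have e2 : ψ (σ + b + h) = ψ (σ + b) :=
        mini1 _ (by simp only [Pi.add_apply, hz, hbz]; decide)
          (by simp only [Pi.add_apply, hu0, hbu]; decide)
      have e3 : ψ (σ + h + b) = ψ (σ + h) :=
        Pb _ (by simp only [Pi.add_apply, hz, hhz]; decide)
      calc ψ (σ + h) = ψ (σ + h + b) := e3.symm
        _ = ψ (σ + b + h) := by rw [add_right_comm]
        _ = ψ (σ + b) := e2
        _ = ψ σ := e1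
  intro σ hv
  by_cases hz : σ z = 1
  · exact mini2 σ hz
  · have hz0 : σ z = 0 := (S7.zmod2_cases _).resolve_right hz
    have e1 : ψ (σ + a) = ψ σ := Pa σ hv
    have e2 : ψ (σ + a + h) = ψ (σ + a) :=
      mini2 _ (by simp only [Pi.add_apply, hz0, haz]; decide)
    have e3 : ψ (σ + h + a) = ψ (σ + h) :=
      Pa _ (by simp only [Pi.add_apply, hv, hhv]; decide)
    calc ψ (σ + h) = ψ (σ + h + a) := e3.symm
      _ = ψ (σ + a + h) := by rw [add_right_comm]
      _ = ψ (σ + a) := e2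
      _ = ψ σ := e1

/-- The mixed case of the main theorem. -/
lemma S7.mixed {D Dhat : ℕ} (hD : 1 ≤ D) (hDhat : 1 ≤ Dhat)
    (hdegV : ∀ v : V, (Finset.univ.filter fun w : Vhat => 𝔥 w v = 1).card ≤ D)
    (hdegVhat : ∀ w : Vhat, (Finset.univ.filter fun v : V => 𝔥 w v = 1).card ≤ Dhat)
    {ShatA : Finset Vhat} {SA : Finset V} {ShatB : Finset Vhat} {SB : Finset V}
    (hAconn : ((bipGraph 𝔥).induce (pairSet' ShatA SA)).Connected)
    (hBconn : ((bipGraph 𝔥).induce (pairSet' ShatB SB)).Connected)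
    (hcardA : 2 * D * Dhat < SA.card) (hcardB : 2 * D * Dhat < SB.card)
    (ψ : EuclideanSpace ℂ (V → ZMod 2))
    (hA : ∀ v w, v ∈ SA → w ∈ ShatA → 𝔥 w v = 0 → S7.Con 𝔥 ψ v w)
    (hB : ∀ v w, v ∈ SB → w ∈ ShatB → 𝔥 w v = 0 → S7.Con 𝔥 ψ v w)
    {v u : V} {vhat ahat : Vhat}
    (hv : v ∈ SA) (hvh : vhat ∈ ShatB) (huA : u ∈ SA) (huB : u ∈ SB)
    (hah : ahat ∈ ShatA) (hav : 𝔥 ahat v = 1) (hau : 𝔥 ahat u = 1) (hvu : 𝔥 vhat u = 1)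
    (hnadj : 𝔥 vhat v = 0) : S7.Con 𝔥 ψ v vhat := by
  have h2DD : 2 ≤ 2 * D * Dhat := by
    calc 2 = 2 * 1 * 1 := by ring
      _ ≤ 2 * D * Dhat := Nat.mul_le_mul (Nat.mul_le_mul_left 2 hD) hDhat
  obtain ⟨z, hzS, hzu, hzv⟩ := S7.exists_far hD hDhat hdegV hdegVhat hcardA u v
  obtain ⟨wz, hwzmem, hwzz⟩ := S7.exists_hat_neighbor hAconn (by omega) hzS
  obtain ⟨y, hyS, hyu, hyz⟩ := S7.exists_far hD hDhat hdegV hdegVhat hcardB u z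
  obtain ⟨wy, hwymem, hwyy⟩ := S7.exists_hat_neighbor hBconn (by omega) hyS
  have hwzv : 𝔥 wz v = 0 := S7.not_ball2' hzv hwzz
  have hbz : 𝔥 ahat z = 0 := S7.not_ball2 hzu hau
  have hhz : 𝔥 vhat z = 0 := S7.not_ball2 hzu hvu
  have hcu : 𝔥 wy u = 0 := S7.not_ball2' hyu hwyy
  have hcz : 𝔥 wy z = 0 := S7.not_ball2' hyz hwyy
  have hhy : 𝔥 vhat y = 0 := S7.not_ball2 hyu hvu
  exact S7.core ψ (fun x => 𝔥 wz x) (fun x => 𝔥 ahat x) (fun x => 𝔥 wy x) (fun x => 𝔥 vhat x)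
    v u z y
    (hA v wz hv hwzmem hwzv) (hA z ahat hzS hah hbz) (hB u wy huB hwymem hcu)
    (hB y vhat hyS hvh hhy)
    hwzz hau hbz hwyy hcz hcu hnadj hhz hvu

lemma S7.mono_pairSet {Shat₁ Shat₂ : Finset Vhat} {S₁ S₂ : Finset V}
    (hsh : Shat₁ ⊆ Shat₂) (hs : S₁ ⊆ S₂) :
    ∀ x, x ∈ pairSet' Shat₁ S₁ → x ∈ pairSet' Shat₂ S₂ := by
  intro x hx
  rcases x with a | a
  · exact hsh hx
  · exact hs hx

lemma S7.dist_mono_three {Shat₁ Shat₂ : Finset Vhat} {S₁ S₂ : Finset V}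
    (hsh : Shat₁ ⊆ Shat₂) (hs : S₁ ⊆ S₂) {v : V} {w : Vhat} (hv : v ∈ S₁) (hw : w ∈ Shat₁)
    (hd : (subGraph 𝔥 Shat₁ S₁).dist (Sum.inr v) (Sum.inl w) = 3) :
    (subGraph 𝔥 Shat₂ S₂).dist (Sum.inr v) (Sum.inl w) = 3 := by
  obtain ⟨p, hp⟩ := SimpleGraph.exists_walk_of_dist_ne_zero (by rw [hd]; omega :
    (subGraph 𝔥 Shat₁ S₁).dist (Sum.inr v) (Sum.inl w) ≠ 0)
  rw [hd] at hp
  let f : subGraph 𝔥 Shat₁ S₁ →g subGraph 𝔥 Shat₂ S₂ :=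
    { toFun := id,
      map_rel' := fun {a b} hab => by
        exact ⟨hab.1, S7.mono_pairSet hsh hs a hab.2.1, S7.mono_pairSet hsh hs b hab.2.2⟩ }
  have hq : (p.map f).length = 3 := by rw [Walk.length_map, hp]
  have hle : (subGraph 𝔥 Shat₂ S₂).dist (Sum.inr v) (Sum.inl w) ≤ 3 := by
    rw [← hq]
    exact SimpleGraph.dist_le (p.map f)
  have hreach : (subGraph 𝔥 Shat₂ S₂).Reachable (Sum.inr v) (Sum.inl w) := ⟨p.map f⟩
  have hpos := hreach.pos_dist_of_ne (by simp)
  have hodd := S7.dist_odd hreach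
  have hne1 : (subGraph 𝔥 Shat₂ S₂).dist (Sum.inr v) (Sum.inl w) ≠ 1 := by
    intro h1
    have hadj := SimpleGraph.dist_eq_one_iff_adj.mp h1
    have h𝔥 : 𝔥 w v = 1 := hadj.1
    have h0 : 𝔥 w v = 0 := S7.row_eq_zero_of_dist_ne_one hv hw (by rw [hd]; omega)
    rw [h0] at h𝔥
    exact absurd h𝔥 (by decide)
  obtain ⟨k, hk⟩ := hodd
  omega

lemma S7.path_of_dist_three {v : V} {w : Vhat}
    (hd : (subGraph 𝔥 Shat S).dist (Sum.inr v) (Sum.inl w) = 3) :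
    ∃ ahat u, ahat ∈ Shat ∧ u ∈ S ∧ 𝔥 ahat v = 1 ∧ 𝔥 ahat u = 1 ∧ 𝔥 w u = 1 := by
  obtain ⟨p, hp⟩ := SimpleGraph.exists_walk_of_dist_ne_zero (by rw [hd]; omega :
    (subGraph 𝔥 Shat S).dist (Sum.inr v) (Sum.inl w) ≠ 0)
  rw [hd] at hp
  have hadj01 := p.adj_getVert_succ (i := 0) (by omega)
  have hadj12 := p.adj_getVert_succ (i := 1) (by omega)
  have hadj23 := p.adj_getVert_succ (i := 2) (by omega)
  rw [Walk.getVert_zero] at hadj01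
  obtain ⟨ahat, h1eq, hav, hamem⟩ := S7.adj_inr hadj01
  rw [h1eq] at hadj12
  obtain ⟨u, h2eq, hau, humem⟩ := S7.adj_inl hadj12
  rw [h2eq] at hadj23
  have h3eq : p.getVert 3 = Sum.inl w := by
    rw [← hp]
    exact p.getVert_length
  rw [h3eq] at hadj23
  exact ⟨ahat, u, hamem, humem, hav, hau, hadj23.1⟩

end S7Aux
/-- STATEMENT 7: for connected, induced, left-closed subgraphs `A` and `B` of the Tanner
graph, each with more than `2·D·D̂` right-vertices, intersecting both in `V` and in `V̂`,
the kernels of the restricted Hamiltonians satisfy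
`ker H'_A ⊓ ker H'_B = ker H'_{A∪B}`. -/
theorem ker_inter_eq_ker_union
    [Nonempty Vhat] [Nonempty V]
    (𝔥 : Matrix Vhat V (ZMod 2)) (D Dhat : ℕ) (hD : 1 ≤ D) (hDhat : 1 ≤ Dhat)
    (hconn : (bipGraph 𝔥).Connected)
    (hdegV : ∀ v : V, (Finset.univ.filter fun w : Vhat => 𝔥 w v = 1).card ≤ D)
    (hdegVhat : ∀ w : Vhat, (Finset.univ.filter fun v : V => 𝔥 w v = 1).card ≤ Dhat)
    (ShatA : Finset Vhat) (SA : Finset V) (ShatB : Finset Vhat) (SB : Finset V)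
    (hAclosed : LeftClosed 𝔥 ShatA SA) (hBclosed : LeftClosed 𝔥 ShatB SB)
    (hAconn : ((bipGraph 𝔥).induce (pairSet' ShatA SA)).Connected)
    (hBconn : ((bipGraph 𝔥).induce (pairSet' ShatB SB)).Connected)
    (hcardA : 2 * D * Dhat < SA.card) (hcardB : 2 * D * Dhat < SB.card)
    (hV : (SA ∩ SB).Nonempty) (hVhat : (ShatA ∩ ShatB).Nonempty) :
    LinearMap.ker (HdefOn 𝔥 ShatA SA) ⊓ LinearMap.ker (HdefOn 𝔥 ShatB SB) =
      LinearMap.ker (HdefOn 𝔥 (ShatA ∪ ShatB) (SA ∪ SB)) := by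
  classical
  apply le_antisymm
  · -- ker A ⊓ ker B ≤ ker (A ∪ B)
    intro ψ hψ
    rw [Submodule.mem_inf] at hψ
    obtain ⟨hkA, hkB⟩ := hψ
    rw [LinearMap.mem_ker] at hkA hkB ⊢
    have hallA := S7.con_all hAconn ((S7.ker_iff ψ).mp hkA)
    have hallB := S7.con_all hBconn ((S7.ker_iff ψ).mp hkB)
    apply (S7.ker_iff ψ).mpr
    intro v w hv hw hd
    have hnadj : 𝔥 w v = 0 := S7.row_eq_zero_of_dist_ne_one hv hw (by rw [hd]; omega)
    obtain ⟨ahat, u, hahat, humem, hav, hau, hwu⟩ := S7.path_of_dist_three hd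
    rcases Finset.mem_union.mp hv with hvA | hvB
    · rcases Finset.mem_union.mp hw with hwA | hwB
      · exact hallA v w hvA hwA hnadj
      · by_cases hvB : v ∈ SB
        · exact hallB v w hvB hwB hnadj
        · have hahatA : ahat ∈ ShatA := by
            rcases Finset.mem_union.mp hahat with h | h
            · exact h
            · exact absurd (hBclosed ahat h v hav) hvB
          have huA : u ∈ SA := hAclosed ahat hahatA u hau
          have huB : u ∈ SB := hBclosed w hwB u hwu
          exact S7.mixed hD hDhat hdegV hdegVhat hAconn hBconn hcardA hcardB ψ hallA hallB
            hvA hwB huA huB hahatA hav hau hwu hnadj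
    · rcases Finset.mem_union.mp hw with hwA | hwB
      · by_cases hvA : v ∈ SA
        · exact hallA v w hvA hwA hnadj
        · have hahatB : ahat ∈ ShatB := by
            rcases Finset.mem_union.mp hahat with h | h
            · exact absurd (hAclosed ahat h v hav) hvA
            · exact h
          have huB : u ∈ SB := hBclosed ahat hahatB u hau
          have huA : u ∈ SA := hAclosed w hwA u hwu
          exact S7.mixed hD hDhat hdegV hdegVhat hBconn hAconn hcardB hcardA ψ hallB hallA
            hvB hwA huB huA hahatB hav hau hwu hnadj
      · exact hallB v w hvB hwB hnadj
  · -- ker (A ∪ B) ≤ ker A ⊓ ker B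
    intro ψ hψ
    rw [LinearMap.mem_ker] at hψ
    have hall := (S7.ker_iff ψ).mp hψ
    rw [Submodule.mem_inf]
    constructor <;> rw [LinearMap.mem_ker] <;> apply (S7.ker_iff ψ).mpr
    · intro v w hv hw hd
      exact hall v w (Finset.mem_union_left _ hv) (Finset.mem_union_left _ hw)
        (S7.dist_mono_three Finset.subset_union_left Finset.subset_union_left hv hw hd)
    · intro v w hv hw hd
      exact hall v w (Finset.mem_union_right _ hv) (Finset.mem_union_right _ hw)
        (S7.dist_mono_three Finset.subset_union_right Finset.subset_union_right hv hw hd)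

end
end

section
/- Let E and F be orthogonal projections on a finite-dimensional complex inner product space. Let G be the orthogonal projection onto (range E) ∩ (range F), and let G' be the orthogonal projection onto (range (1 − E)) ∩ (range (1 − F)) (equivalently, onto (ker E) ∩ (ker F)). Then ‖E∘F − G‖ = ‖(1 − E)∘(1 − F) − G'‖ in operator norm. -/
set_option linter.unusedSectionVars false

section

variable {H : Type*} [NormedAddCommGroup H] [InnerProductSpace ℂ H] [FiniteDimensional ℂ H]

/-- The orthogonal projection onto a subspace, as a continuous endomorphism. -/
noncomputable def projOnto (K : Submodule ℂ H) : H →L[ℂ] H :=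
  K.subtypeL.comp (K.orthogonalProjectionOnto)

lemma projOnto_mem (K : Submodule ℂ H) (x : H) : projOnto K x ∈ K :=
  (K.orthogonalProjectionOnto x).2

lemma projOnto_eq_self {K : Submodule ℂ H} {x : H} (h : x ∈ K) : projOnto K x = x :=
  K.starProjection_eq_self_iff.mpr h

lemma projOnto_eq_zero {K : Submodule ℂ H} {x : H} (h : x ∈ Kᗮ) : projOnto K x = 0 := by
  simp [projOnto, Submodule.orthogonalProjectionOnto_apply_of_mem_orthogonal h]

lemma projOnto_isSelfAdjoint (K : Submodule ℂ H) : IsSelfAdjoint (projOnto K) :=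
  isSelfAdjoint_starProjection K

lemma mem_spectrum_of_eigen {T : H →L[ℂ] H} {k : ℂ} {z : H} (hz : z ≠ 0) (h : T z = k • z) :
    k ∈ spectrum ℂ T := by
  rw [spectrum.mem_iff]
  intro hu
  have hL : (algebraMap ℂ (H →L[ℂ] H) k - T) z = 0 := by
    simp [Algebra.algebraMap_eq_smul_one, h]
  have hbij := ContinuousLinearMap.isUnit_iff_bijective.mp hu
  have : z = 0 := by
    have := hbij.injective (a₁ := z) (a₂ := 0) (by simpa using hL)
    simpa using this
  exact hz this

lemma exists_eigen_of_mem_spectrum {T : H →L[ℂ] H} {k : ℂ} (hk : k ∈ spectrum ℂ T) :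
    ∃ z : H, z ≠ 0 ∧ T z = k • z := by
  have h := spectrum.mem_iff.mp hk
  by_contra hc
  push_neg at hc
  apply h
  rw [ContinuousLinearMap.isUnit_iff_bijective]
  have hinj : Function.Injective (algebraMap ℂ (H →L[ℂ] H) k - T) := by
    intro a b hab
    by_contra hne
    have hz : a - b ≠ 0 := sub_ne_zero.mpr hne
    have h0 : (algebraMap ℂ (H →L[ℂ] H) k - T) (a - b) = 0 := by
      rw [map_sub, hab, sub_self]
    have : T (a - b) = k • (a - b) := by
      have h1 : k • (a - b) - T (a - b) = 0 := by
        simpa [Algebra.algebraMap_eq_smul_one] using h0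
      have := sub_eq_zero.mp h1
      exact this.symm
    exact hc (a - b) hz this
  exact ⟨hinj, (LinearMap.injective_iff_surjective (f := (algebraMap ℂ (H →L[ℂ] H) k - T).toLinearMap)).mp hinj⟩

end
section
variable {H : Type*} [NormedAddCommGroup H] [InnerProductSpace ℂ H] [FiniteDimensional ℂ H]

lemma fix_of_range {E : H →L[ℂ] H} (hE2 : E * E = E) {y : H} (hy : y ∈ LinearMap.range (E : H →ₗ[ℂ] H)) :
    E y = y := by
  obtain ⟨u, hu⟩ := hy
  have h := DFunLike.congr_fun hE2 u
  simp only [ContinuousLinearMap.mul_apply] at h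
  rw [← hu]
  simpa using h

lemma projOnto_comp_fix {K : Submodule ℂ H} {E : H →L[ℂ] H}
    (hfix : ∀ u ∈ K, E u = u)
    (hEsa : ∀ ψ φ : H, (inner ℂ (E ψ) φ : ℂ) = inner ℂ ψ (E φ)) (w : H) :
    projOnto K (E w) = projOnto K w := by
  have horth : w - E w ∈ Kᗮ := by
    rw [Submodule.mem_orthogonal]
    intro u hu
    rw [inner_sub_right, ← hEsa u w, hfix u hu, sub_self]
  have h0 : projOnto K (w - E w) = 0 := projOnto_eq_zero horth
  rw [map_sub] at h0
  exact (sub_eq_zero.mp h0).symm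

end
section
variable {H : Type*} [NormedAddCommGroup H] [InnerProductSpace ℂ H] [FiniteDimensional ℂ H]

lemma key_le (E F : H →L[ℂ] H) (hE2 : E * E = E) (hF2 : F * F = F)
    (hEsa : ∀ ψ φ : H, (inner ℂ (E ψ) φ : ℂ) = inner ℂ ψ (E φ))
    (hFsa : ∀ ψ φ : H, (inner ℂ (F ψ) φ : ℂ) = inner ℂ ψ (F φ)) :
    ‖E * F * E - projOnto (LinearMap.range (E : H →ₗ[ℂ] H) ⊓ LinearMap.range (F : H →ₗ[ℂ] H))‖ ≤
      ‖(1 - E) * (1 - F) * (1 - E) -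
        projOnto (LinearMap.range ((1 - E : H →L[ℂ] H) : H →ₗ[ℂ] H) ⊓ LinearMap.range ((1 - F : H →L[ℂ] H) : H →ₗ[ℂ] H))‖ := by
  rcases subsingleton_or_nontrivial H with hs | hn
  · have h0 : E * F * E - projOnto (LinearMap.range (E : H →ₗ[ℂ] H) ⊓ LinearMap.range (F : H →ₗ[ℂ] H)) = 0 := by
      ext x
      exact Subsingleton.elim _ _
    rw [h0, norm_zero]
    exact norm_nonneg _
  set K : Submodule ℂ H := LinearMap.range (E : H →ₗ[ℂ] H) ⊓ LinearMap.range (F : H →ₗ[ℂ] H) with hK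
  set K' : Submodule ℂ H := LinearMap.range ((1 - E : H →L[ℂ] H) : H →ₗ[ℂ] H) ⊓ LinearMap.range ((1 - F : H →L[ℂ] H) : H →ₗ[ℂ] H) with hK'
  set G : H →L[ℂ] H := projOnto K with hGdef
  set G' : H →L[ℂ] H := projOnto K' with hG'def
  set A : H →L[ℂ] H := E * F * E - G with hAdef
  set B : H →L[ℂ] H := (1 - E) * (1 - F) * (1 - E) - G' with hBdef
  -- pointwise idempotency
  have hEapp : ∀ y, E (E y) = E y := fun y => by
    have := DFunLike.congr_fun hE2 y; simpa [ContinuousLinearMap.mul_apply] using this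
  have hFapp : ∀ y, F (F y) = F y := fun y => by
    have := DFunLike.congr_fun hF2 y; simpa [ContinuousLinearMap.mul_apply] using this
  -- G absorbs E and F
  have hGE : ∀ w, G (E w) = G w := fun w =>
    projOnto_comp_fix (fun u hu => fix_of_range hE2 (Submodule.mem_inf.mp hu).1) hEsa w
  have hGF : ∀ w, G (F w) = G w := fun w =>
    projOnto_comp_fix (fun u hu => fix_of_range hF2 (Submodule.mem_inf.mp hu).2) hFsa w
  have hGG : ∀ w, G (G w) = G w := fun w => projOnto_eq_self (projOnto_mem K (G w)) |>.symm ▸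
    projOnto_eq_self (projOnto_mem K w)
  -- selfadjointness
  have hEst : IsSelfAdjoint E := ContinuousLinearMap.isSelfAdjoint_iff_isSymmetric.mpr
    (fun x y => hEsa x y)
  have hFst : IsSelfAdjoint F := ContinuousLinearMap.isSelfAdjoint_iff_isSymmetric.mpr
    (fun x y => hFsa x y)
  have hGst : IsSelfAdjoint G := projOnto_isSelfAdjoint K
  have hA : IsSelfAdjoint A := by
    rw [hAdef]
    simp only [IsSelfAdjoint, star_sub, star_mul, hEst.star_eq, hFst.star_eq, hGst.star_eq,
      mul_assoc]
  -- the pointwise claim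
  have hmain : ∀ k ∈ spectrum ℂ A, ‖k‖ ≤ ‖B‖ := by
    intro k hk
    obtain ⟨x, hx0, hAx⟩ := exists_eigen_of_mem_spectrum hk
    by_cases hk0 : k = 0
    · simpa [hk0] using norm_nonneg B
    have hAx' : E (F (E x)) - G x = k • x := by
      have : A x = E (F (E x)) - G x := by
        simp [hAdef, ContinuousLinearMap.sub_apply, ContinuousLinearMap.mul_apply]
      rw [← this, hAx]
    -- G x = 0
    have hGx : G x = 0 := by
      have h1 : G (E (F (E x)) - G x) = 0 := by
        rw [map_sub, hGE, hGF, hGE, hGG, sub_self]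
      rw [hAx', map_smul] at h1
      exact (smul_eq_zero.mp h1).resolve_left hk0
    have hEFE : E (F (E x)) = k • x := by rw [← hAx', hGx, sub_zero]
    -- E x = x
    have hEx : E x = x := by
      have h1 : E (E (F (E x))) = k • E x := by rw [hEFE, map_smul]
      rw [hEapp, hEFE] at h1
      exact (smul_right_injective H hk0 h1).symm
    have hEFx : E (F x) = k • x := by rw [← hEFE, hEx]
    by_cases hk1 : k = 1
    · exfalso
      subst hk1
      rw [one_smul] at hEFx
      have hxFx : (inner ℂ x (F x) : ℂ) = inner ℂ x x := by
        have h1 : (inner ℂ (E x) (F x) : ℂ) = inner ℂ x (E (F x)) := hEsa x (F x)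
        rw [hEx, hEFx] at h1
        exact h1
      have hzero : (inner ℂ (F x - x) (F x - x) : ℂ) = 0 := by
        have hFF : (inner ℂ (F x) (F x) : ℂ) = inner ℂ x (F x) := by
          rw [hFsa x (F x), hFapp]
        have hFxx : (inner ℂ (F x) x : ℂ) = inner ℂ x (F x) := hFsa x x
        rw [inner_sub_left, inner_sub_right, inner_sub_right, hFF, hFxx]
        rw [hxFx]
        ring
      have hFx : F x = x := sub_eq_zero.mp (inner_self_eq_zero.mp hzero)
      have hxK : x ∈ K := ⟨⟨x, hEx⟩, ⟨x, hFx⟩⟩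
      have : G x = x := projOnto_eq_self hxK
      rw [hGx] at this
      exact hx0 this.symm
    -- generic case: build eigenvector of B
    set z : H := F x - k • x with hzdef
    have hz0 : z ≠ 0 := by
      intro h
      have hFx : F x = k • x := sub_eq_zero.mp h
      have h1 : F (F x) = (k * k) • x := by
        rw [hFx, map_smul, hFx, smul_smul]
      rw [hFapp, hFx] at h1
      have h2 : (k - k * k) • x = 0 := by
        rw [sub_smul, h1, sub_self]
      have hkk : k - k * k ≠ 0 := by
        intro h
        have : k * (1 - k) = 0 := by ring_nf; linear_combination h
        rcases mul_eq_zero.mp this with h' | h'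
        · exact hk0 h'
        · exact hk1 (by linear_combination -h')
      exact hx0 ((smul_eq_zero.mp h2).resolve_left hkk)
    have hEz : E z = 0 := by
      rw [hzdef, map_sub, map_smul, hEFx, hEx, sub_self]
    have hFz : F z = F x - k • F x := by
      rw [hzdef, map_sub, map_smul, hFapp]
    -- B z = k • z
    have hBz : B z = k • z := by
      have h1 : (1 - E) z = z := by
        simp [ContinuousLinearMap.sub_apply, hEz]
      have h2 : (1 - F) z = k • F x - k • x := by
        simp only [ContinuousLinearMap.sub_apply, ContinuousLinearMap.one_apply, hFz, hzdef,
          map_sub, map_smul, hFapp]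
        module
      have h3 : (1 - E) (k • F x - k • x) = k • z := by
        simp only [map_sub, map_smul, ContinuousLinearMap.sub_apply,
          ContinuousLinearMap.one_apply, hEFx, hEx, hzdef]
        module
      have hG'z : G' z = 0 := by
        apply projOnto_eq_zero
        rw [Submodule.mem_orthogonal]
        rintro w ⟨⟨u, hu⟩, ⟨v, hv⟩⟩
        have hEw : E w = 0 := by
          have : w = u - E u := by
            rw [← hu]; simp [ContinuousLinearMap.sub_apply]
          rw [this, map_sub, hEapp, sub_self]
        have hFw : F w = 0 := by
          have : w = v - F v := by
            rw [← hv]; simp [ContinuousLinearMap.sub_apply]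
          rw [this, map_sub, hFapp, sub_self]
        have e1 : (inner ℂ w (F x) : ℂ) = 0 := by
          rw [← hFsa w x, hFw, inner_zero_left]
        have e2 : (inner ℂ w x : ℂ) = 0 := by
          rw [← hEx, ← hEsa w x, hEw, inner_zero_left]
        rw [hzdef, inner_sub_right, inner_smul_right, e1, e2, mul_zero, sub_self]
      rw [hBdef]
      simp only [ContinuousLinearMap.sub_apply, ContinuousLinearMap.mul_apply, h1, h2, h3, hG'z,
        sub_zero]
    have hkB : k ∈ spectrum ℂ B := mem_spectrum_of_eigen hz0 hBz
    exact spectrum.norm_le_norm_of_mem hkB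
  -- from spectral radius to norms
  have hrad : (‖A‖₊ : ENNReal) ≤ (‖B‖₊ : ENNReal) := by
    rw [← hA.spectralRadius_eq_nnnorm, spectralRadius]
    refine iSup₂_le fun k hk => ?_
    have := hmain k hk
    exact_mod_cast this
  have : ‖A‖₊ ≤ ‖B‖₊ := by exact_mod_cast hrad
  exact_mod_cast this

end
section
variable {H : Type*} [NormedAddCommGroup H] [InnerProductSpace ℂ H] [FiniteDimensional ℂ H]

lemma norm_sq_eq (E F : H →L[ℂ] H) (hE2 : E * E = E) (hF2 : F * F = F)
    (hEsa : ∀ ψ φ : H, (inner ℂ (E ψ) φ : ℂ) = inner ℂ ψ (E φ))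
    (hFsa : ∀ ψ φ : H, (inner ℂ (F ψ) φ : ℂ) = inner ℂ ψ (F φ)) :
    ‖E * F - projOnto (LinearMap.range (E : H →ₗ[ℂ] H) ⊓ LinearMap.range (F : H →ₗ[ℂ] H))‖ *
      ‖E * F - projOnto (LinearMap.range (E : H →ₗ[ℂ] H) ⊓ LinearMap.range (F : H →ₗ[ℂ] H))‖ =
    ‖E * F * E - projOnto (LinearMap.range (E : H →ₗ[ℂ] H) ⊓ LinearMap.range (F : H →ₗ[ℂ] H))‖ := by
  set K : Submodule ℂ H := LinearMap.range (E : H →ₗ[ℂ] H) ⊓ LinearMap.range (F : H →ₗ[ℂ] H) with hK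
  set G : H →L[ℂ] H := projOnto K with hGdef
  have hEst : IsSelfAdjoint E := ContinuousLinearMap.isSelfAdjoint_iff_isSymmetric.mpr
    (fun x y => hEsa x y)
  have hFst : IsSelfAdjoint F := ContinuousLinearMap.isSelfAdjoint_iff_isSymmetric.mpr
    (fun x y => hFsa x y)
  have hGst : IsSelfAdjoint G := projOnto_isSelfAdjoint K
  have hGEop : G * E = G := by
    ext w
    simpa [ContinuousLinearMap.mul_apply] using
      projOnto_comp_fix (fun u hu => fix_of_range hE2 (Submodule.mem_inf.mp hu).1) hEsa w
  have hGFop : G * F = G := by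
    ext w
    simpa [ContinuousLinearMap.mul_apply] using
      projOnto_comp_fix (fun u hu => fix_of_range hF2 (Submodule.mem_inf.mp hu).2) hFsa w
  have hEGop : E * G = G := by
    ext w
    simpa [ContinuousLinearMap.mul_apply] using
      fix_of_range hE2 (Submodule.mem_inf.mp (projOnto_mem K w)).1
  have hFGop : F * G = G := by
    ext w
    simpa [ContinuousLinearMap.mul_apply] using
      fix_of_range hF2 (Submodule.mem_inf.mp (projOnto_mem K w)).2
  have hGGop : G * G = G := by
    ext w
    simpa [ContinuousLinearMap.mul_apply] using projOnto_eq_self (projOnto_mem K w)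
  have hstar : star (E * F - G) = F * E - G := by
    rw [star_sub, star_mul, hEst.star_eq, hFst.star_eq, hGst.star_eq]
  have hTT : (E * F - G) * star (E * F - G) = E * F * E - G := by
    rw [hstar]
    have expand : (E * F - G) * (F * E - G) =
        E * (F * F) * E - E * (F * G) - (G * F) * E + G * G := by noncomm_ring
    rw [expand, hF2, hFGop, hEGop, hGFop, hGEop, hGGop]
    abel
  calc ‖E * F - G‖ * ‖E * F - G‖ = ‖(E * F - G) * star (E * F - G)‖ :=
        (CStarRing.norm_self_mul_star).symm
    _ = ‖E * F * E - G‖ := by rw [hTT]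

/-- STATEMENT 15: for orthogonal projections `E`, `F` on a finite-dimensional complex inner
product space, with `G` the orthogonal projection onto `range E ⊓ range F` and `G'` the
orthogonal projection onto `range (1−E) ⊓ range (1−F)`, one has
`‖E∘F − G‖ = ‖(1−E)∘(1−F) − G'‖` in operator norm. -/
theorem norm_proj_diff_eq_norm_complement_proj_diff
    (E F : H →L[ℂ] H)
    (hE2 : E.comp E = E) (hF2 : F.comp F = F)
    (hEsa : ∀ ψ φ : H, (inner ℂ (E ψ) φ : ℂ) = inner ℂ ψ (E φ))
    (hFsa : ∀ ψ φ : H, (inner ℂ (F ψ) φ : ℂ) = inner ℂ ψ (F φ)) :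
    ‖E.comp F - projOnto (LinearMap.range (E : H →ₗ[ℂ] H) ⊓ LinearMap.range (F : H →ₗ[ℂ] H))‖ =
      ‖(1 - E).comp (1 - F) -
        projOnto (LinearMap.range ((1 - E : H →L[ℂ] H) : H →ₗ[ℂ] H) ⊓ LinearMap.range ((1 - F : H →L[ℂ] H) : H →ₗ[ℂ] H))‖ := by
  have hE2' : E * E = E := hE2
  have hF2' : F * F = F := hF2
  have h0E : (1 - E) * E = 0 := by rw [sub_mul, one_mul, hE2', sub_self]
  have h0F : (1 - F) * F = 0 := by rw [sub_mul, one_mul, hF2', sub_self]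
  have hE'2 : (1 - E) * (1 - E) = 1 - E := by rw [mul_sub, mul_one, h0E, sub_zero]
  have hF'2 : (1 - F) * (1 - F) = 1 - F := by rw [mul_sub, mul_one, h0F, sub_zero]
  have hE'sa : ∀ ψ φ : H, (inner ℂ ((1 - E) ψ) φ : ℂ) = inner ℂ ψ ((1 - E) φ) := by
    intro ψ φ
    simp only [ContinuousLinearMap.sub_apply, ContinuousLinearMap.one_apply, inner_sub_left,
      inner_sub_right, hEsa]
  have hF'sa : ∀ ψ φ : H, (inner ℂ ((1 - F) ψ) φ : ℂ) = inner ℂ ψ ((1 - F) φ) := by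
    intro ψ φ
    simp only [ContinuousLinearMap.sub_apply, ContinuousLinearMap.one_apply, inner_sub_left,
      inner_sub_right, hFsa]
  have h1 := norm_sq_eq E F hE2' hF2' hEsa hFsa
  have h2 := norm_sq_eq (1 - E) (1 - F) hE'2 hF'2 hE'sa hF'sa
  have h3 := key_le E F hE2' hF2' hEsa hFsa
  have h4 := key_le (1 - E) (1 - F) hE'2 hF'2 hE'sa hF'sa
  simp only [sub_sub_cancel] at h4
  have hAB := le_antisymm h3 h4
  have hsq : ‖E * F - projOnto (LinearMap.range (E : H →ₗ[ℂ] H) ⊓ LinearMap.range (F : H →ₗ[ℂ] H))‖ *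
      ‖E * F - projOnto (LinearMap.range (E : H →ₗ[ℂ] H) ⊓ LinearMap.range (F : H →ₗ[ℂ] H))‖ =
      ‖(1 - E) * (1 - F) - projOnto (LinearMap.range ((1 - E : H →L[ℂ] H) : H →ₗ[ℂ] H) ⊓ LinearMap.range ((1 - F : H →L[ℂ] H) : H →ₗ[ℂ] H))‖ *
      ‖(1 - E) * (1 - F) - projOnto (LinearMap.range ((1 - E : H →L[ℂ] H) : H →ₗ[ℂ] H) ⊓ LinearMap.range ((1 - F : H →L[ℂ] H) : H →ₗ[ℂ] H))‖ := by
    rw [h1, h2, hAB]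
  exact (mul_self_inj (norm_nonneg _) (norm_nonneg _)).mp hsq


end
end
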